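/- arXiv:2110.06129 — 2 statements merged into one kernel-verified Lean document; each statement's English description precedes it below -/
import Mathlib

section
/- For every prime p, natural numbers n, m ≥ 1 and r ≥ 0 with n ≥ p^m and p ∤ m, B_{n−p^m, r} ≡ Σ_{k=0}^{n} S_r(n,k) (−1)^{k+m+r−1} D_{k+m+r−1} (mod p). -/
open Finset

/-- Stirling numbers of the second kind. -/
def S2 : ℕ → ℕ → ℕ
  | 0, 0 => 1
  | 0, _ + 1 => 0
  | _ + 1, 0 => 0
  | n + 1, k + 1 => (k + 1) * S2 n (k + 1) + S2 n k

/-- Bell numbers. -/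
def bell (n : ℕ) : ℕ := ∑ k ∈ Finset.range (n + 1), S2 n k

/-- r-Stirling numbers of the second kind. -/
def rS2 (r : ℕ) : ℕ → ℕ → ℕ
  | 0, 0 => 1
  | 0, _ + 1 => 0
  | n + 1, 0 => r * rS2 r n 0
  | n + 1, k + 1 => rS2 r n k + (k + 1 + r) * rS2 r n (k + 1)

/-- Unsigned r-Stirling numbers of the first kind. -/
def rS1 (r : ℕ) : ℕ → ℕ → ℕ
  | 0, 0 => 1
  | 0, _ + 1 => 0
  | n + 1, 0 => (r + n) * rS1 r n 0
  | n + 1, k + 1 => rS1 r n k + (r + n) * rS1 r n (k + 1)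

/-- r-Bell numbers for integer r. -/
def rBell (n : ℕ) (r : ℤ) : ℤ :=
  ∑ j ∈ Finset.range (n + 1), (n.choose j : ℤ) * r ^ (n - j) * (bell j : ℤ)

/-- r-Bell numbers for natural r, via r-Stirling numbers. -/
def rBellNat (n r : ℕ) : ℕ := ∑ k ∈ Finset.range (n + 1), rS2 r n k

/-! ### Auxiliary lemmas -/

lemma rS2_zero (r k : ℕ) : rS2 r 0 k = if k = 0 then 1 else 0 := by
  cases k <;> simp [rS2]

lemma rS2_succ_zero (r n : ℕ) : rS2 r (n + 1) 0 = r * rS2 r n 0 := rfl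

lemma rS2_succ_succ (r n k : ℕ) :
    rS2 r (n + 1) (k + 1) = rS2 r n k + (k + 1 + r) * rS2 r n (k + 1) := rfl

lemma rS2_n_zero (r n : ℕ) : rS2 r n 0 = r ^ n := by
  induction n with
  | zero => simp [rS2]
  | succ n ih => rw [rS2_succ_zero, ih, pow_succ]; ring

lemma rS2_eq_zero_of_lt (r : ℕ) : ∀ n k, n < k → rS2 r n k = 0 := by
  intro n
  induction n with
  | zero =>
    intro k hk
    obtain ⟨k', rfl⟩ : ∃ k', k = k' + 1 := ⟨k - 1, by omega⟩
    rfl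
  | succ n ih =>
    intro k hk
    obtain ⟨k', rfl⟩ : ∃ k', k = k' + 1 := ⟨k - 1, by omega⟩
    rw [rS2_succ_succ, ih _ (by omega), ih _ (by omega)]
    ring

lemma S2_eq_zero_of_lt : ∀ n k, n < k → S2 n k = 0 := by
  intro n
  induction n with
  | zero =>
    intro k hk
    obtain ⟨k', rfl⟩ : ∃ k', k = k' + 1 := ⟨k - 1, by omega⟩
    rfl
  | succ n ih =>
    intro k hk
    obtain ⟨k', rfl⟩ : ∃ k', k = k' + 1 := ⟨k - 1, by omega⟩
    show (k' + 1) * S2 n (k' + 1) + S2 n k' = 0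
    rw [ih _ (by omega), ih _ (by omega)]
    simp

lemma S2_self : ∀ n, S2 n n = 1 := by
  intro n
  induction n with
  | zero => rfl
  | succ n ih =>
    show (n + 1) * S2 n (n + 1) + S2 n n = 1
    rw [S2_eq_zero_of_lt n (n + 1) (by omega), ih]
    simp

lemma S2_zero (k : ℕ) : S2 0 k = if k = 0 then 1 else 0 := by
  cases k <;> rfl

lemma S2_n_zero (n : ℕ) : S2 n 0 = if n = 0 then 1 else 0 := by
  cases n <;> rfl

/-- Formula (A): r-Stirling in terms of ordinary Stirling. -/
lemma rS2_eq_sum (r : ℕ) : ∀ n k, rS2 r n k = ∑ j ∈ range (n + 1), n.choose j * r ^ (n - j) * S2 j k := by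
  intro n
  induction n with
  | zero => intro k; simp [rS2_zero, S2_zero]
  | succ n ih =>
    intro k
    cases k with
    | zero =>
      rw [rS2_n_zero]
      rw [Finset.sum_eq_single 0]
      · simp [S2_zero]
      · intro j hj hj0
        obtain ⟨j', rfl⟩ : ∃ j', j = j' + 1 := ⟨j - 1, by omega⟩
        simp [S2_n_zero]
      · simp
    | succ k =>
      have hshift : ∑ j ∈ range (n + 1), n.choose (j + 1) * r ^ (n - j) * S2 (j + 1) (k+1)
          = r * ∑ j ∈ range (n + 1), n.choose j * r ^ (n - j) * S2 j (k+1) := by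
        have e1 := Finset.sum_range_succ' (fun j => n.choose j * r ^ (n + 1 - j) * S2 j (k+1)) (n + 1)
        have e2 := Finset.sum_range_succ (fun j => n.choose j * r ^ (n + 1 - j) * S2 j (k+1)) (n + 1)
        have e3 : ∀ j ∈ range (n + 1), n.choose (j + 1) * r ^ (n + 1 - (j + 1)) * S2 (j + 1) (k+1)
            = n.choose (j + 1) * r ^ (n - j) * S2 (j + 1) (k+1) := by
          intro j hj
          have h6 : n + 1 - (j + 1) = n - j := by omega
          rw [h6]
        have e4 : ∀ j ∈ range (n + 1), n.choose j * r ^ (n + 1 - j) * S2 j (k+1)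
            = r * (n.choose j * r ^ (n - j) * S2 j (k+1)) := by
          intro j hj
          simp only [mem_range] at hj
          have h5 : n + 1 - j = (n - j) + 1 := by omega
          rw [h5, pow_succ]
          ring
        rw [Finset.sum_congr rfl e3] at e1
        rw [Finset.sum_congr rfl e4, ← Finset.mul_sum] at e2
        rw [Nat.choose_succ_self, Nat.zero_mul, Nat.zero_mul, Nat.add_zero] at e2
        have e5 : n.choose 0 * r ^ (n + 1 - 0) * S2 0 (k+1) = 0 := by simp [S2_zero]
        rw [e5, Nat.add_zero] at e1
        omega
      have key : ∑ j ∈ range (n + 2), (n+1).choose j * r ^ (n + 1 - j) * S2 j (k+1)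
          = (∑ j ∈ range (n + 1), n.choose j * r ^ (n - j) * S2 j k)
            + (k + 1) * (∑ j ∈ range (n + 1), n.choose j * r ^ (n - j) * S2 j (k+1))
            + r * (∑ j ∈ range (n + 1), n.choose j * r ^ (n - j) * S2 j (k+1)) := by
        rw [Finset.sum_range_succ' (fun j => (n+1).choose j * r ^ (n + 1 - j) * S2 j (k+1)) (n+1)]
        have e0 : (n+1).choose 0 * r ^ (n + 1 - 0) * S2 0 (k+1) = 0 := by simp [S2_zero]
        rw [e0, Nat.add_zero]
        have hterm : ∀ j ∈ range (n + 1),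
            (n+1).choose (j+1) * r ^ (n + 1 - (j+1)) * S2 (j+1) (k+1)
            = n.choose j * r ^ (n - j) * S2 j k
              + (k + 1) * (n.choose j * r ^ (n - j) * S2 j (k+1))
              + n.choose (j+1) * r ^ (n - j) * S2 (j+1) (k+1) := by
          intro j hj
          have hsub : n + 1 - (j + 1) = n - j := by omega
          have hS : S2 (j+1) (k+1) = (k + 1) * S2 j (k + 1) + S2 j k := rfl
          rw [Nat.choose_succ_succ, hsub, hS]
          ring
        rw [Finset.sum_congr rfl hterm, Finset.sum_add_distrib, Finset.sum_add_distrib,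
          hshift, ← Finset.mul_sum]
      rw [rS2_succ_succ, ih, ih, key]
      ring

/-- Composition identity. -/
lemma rS2_comp (r b : ℕ) : ∀ a k, rS2 r (a + b) k = ∑ j ∈ range (k + 1), rS2 r b j * rS2 (j + r) a (k - j) := by
  intro a
  induction a with
  | zero =>
    intro k
    rw [Nat.zero_add]
    rw [Finset.sum_eq_single k]
    · simp [rS2_zero]
    · intro j hj hjk
      simp only [mem_range] at hj
      rw [rS2_zero]
      have : ¬ (k - j = 0) := by omega
      rw [if_neg this]
      ring
    · intro h
      exact absurd (self_mem_range_succ k) h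
  | succ a ih =>
    intro k
    have hadd : a + 1 + b = (a + b) + 1 := by omega
    rw [hadd]
    cases k with
    | zero =>
      rw [rS2_succ_zero, ih 0]
      simp [Finset.sum_range_one, rS2_succ_zero]
      ring
    | succ k =>
      rw [rS2_succ_succ, ih k, ih (k+1)]
      rw [Finset.sum_range_succ (fun j => rS2 r b j * rS2 (j + r) (a+1) (k + 1 - j))]
      have hlast : rS2 r b (k+1) * rS2 (k + 1 + r) (a+1) (k + 1 - (k+1))
          = rS2 r b (k+1) * ((k + 1 + r) * rS2 (k + 1 + r) a 0) := by
        rw [Nat.sub_self, rS2_succ_zero]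
      have hterm : ∀ j ∈ range (k + 1),
          rS2 r b j * rS2 (j + r) (a+1) (k + 1 - j)
          = rS2 r b j * rS2 (j + r) a (k - j)
            + (k + 1 + r) * (rS2 r b j * rS2 (j + r) a (k + 1 - j)) := by
        intro j hj
        simp only [mem_range] at hj
        have h1 : k + 1 - j = (k - j) + 1 := by omega
        rw [h1, rS2_succ_succ]
        have h2 : k - j + 1 + (j + r) = k + 1 + r := by omega
        rw [h2, ← h1]
        ring
      rw [Finset.sum_congr rfl hterm, Finset.sum_add_distrib, hlast]
      rw [← Finset.mul_sum]
      rw [Finset.sum_range_succ (fun j => rS2 r b j * rS2 (j + r) a (k + 1 - j))]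
      rw [Nat.sub_self]
      ring

lemma rS2_one_col (r : ℕ) : ∀ n, rS2 r n 1 + r ^ n = (r + 1) ^ n := by
  intro n
  induction n with
  | zero => simp [rS2]
  | succ n ih =>
    show rS2 r n 0 + (1 + r) * rS2 r n 1 + r ^ (n+1) = (r+1)^(n+1)
    rw [rS2_n_zero]
    have h : (r+1)^(n+1) = (r+1) * ((r+1)^n) := by ring
    rw [h, ← ih]
    ring

lemma rS2_shift (r : ℕ) : ∀ n k, rS2 r (n + 1) (k + 1) = rS2 (r + 1) n k + r * rS2 r n (k + 1) := by
  intro n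
  induction n with
  | zero =>
    intro k
    show rS2 r 0 k + (k + 1 + r) * rS2 r 0 (k+1) = rS2 (r+1) 0 k + r * rS2 r 0 (k+1)
    simp [rS2_zero]
  | succ n ih =>
    intro k
    cases k with
    | zero =>
      show rS2 r (n+1) 0 + (0 + 1 + r) * rS2 r (n+1) 1 = rS2 (r+1) (n+1) 0 + r * rS2 r (n+1) 1
      rw [rS2_n_zero, rS2_n_zero]
      rw [← rS2_one_col r (n+1)]
      ring
    | succ k =>
      show rS2 r (n+1) (k+1) + (k + 1 + 1 + r) * rS2 r (n+1) (k+2)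
          = rS2 (r+1) (n+1) (k+1) + r * rS2 r (n+1) (k+2)
      have hx : rS2 r n (k+1) + (k + 1 + 1 + r) * rS2 r n (k+2)
          = rS2 (r+1) n (k+1) + r * rS2 r n (k+2) := by
        rw [← rS2_succ_succ]
        exact ih (k+1)
      rw [ih k, rS2_succ_succ (r+1) n k, rS2_succ_succ r n (k+1)]
      zify at hx ⊢
      linear_combination ((k:ℤ) + 1 + 1 + (r:ℤ)) * hx

lemma rBellNat_succ (n r : ℕ) : rBellNat (n + 1) r = rBellNat n (r + 1) + r * rBellNat n r := by
  unfold rBellNat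
  rw [Finset.sum_range_succ' (fun k => rS2 r (n+1) k) (n+1)]
  have hterm : ∀ k ∈ range (n + 1), rS2 r (n+1) (k+1) = rS2 (r+1) n k + r * rS2 r n (k+1) :=
    fun k _ => rS2_shift r n k
  rw [Finset.sum_congr rfl hterm, Finset.sum_add_distrib, ← Finset.mul_sum]
  have h0 : rS2 r (n+1) 0 = r * rS2 r n 0 := rfl
  rw [h0]
  have hback : rS2 r n 0 + ∑ k ∈ range (n+1), rS2 r n (k+1) = ∑ k ∈ range (n+1+1), rS2 r n k := by
    rw [Finset.sum_range_succ' (fun k => rS2 r n k) (n+1)]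
    omega
  have hfull : ∑ k ∈ range (n+1+1), rS2 r n k = ∑ k ∈ range (n+1), rS2 r n k := by
    rw [Finset.sum_range_succ, rS2_eq_zero_of_lt r n (n+1) (by omega)]
    omega
  have : ∑ k ∈ range (n+1), rS2 (r+1) n k + r * ∑ k ∈ range (n+1), rS2 r n (k+1) + r * rS2 r n 0
      = ∑ k ∈ range (n+1), rS2 (r+1) n k
        + r * (rS2 r n 0 + ∑ k ∈ range (n+1), rS2 r n (k+1)) := by ring
  rw [this, hback, hfull]

/-- Stirling factorial formula over ℤ. -/
lemma S2_factorial_formula : ∀ n k, (k.factorial : ℤ) * S2 n k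
    = ∑ i ∈ range (k + 1), (-1 : ℤ) ^ i * k.choose i * ((k - i : ℕ) : ℤ) ^ n := by
  intro n
  induction n with
  | zero =>
    intro k
    simp only [pow_zero, mul_one, S2_zero]
    rw [Int.alternating_sum_range_choose]
    cases k with
    | zero => simp
    | succ k => simp [Nat.factorial]
  | succ n ih =>
    intro k
    cases k with
    | zero => simp [S2_n_zero]
    | succ k =>
      have hstep1 : ∀ i ∈ range (k + 2),
          (-1 : ℤ) ^ i * (k+1).choose i * ((k + 1 - i : ℕ) : ℤ) ^ (n+1)
          = ((k : ℤ) + 1) * ((-1 : ℤ) ^ i * k.choose i * ((k + 1 - i : ℕ) : ℤ) ^ n) := by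
        intro i hi
        simp only [mem_range] at hi
        rcases Nat.lt_or_ge i (k+1) with hik | hik
        · have hsub : k + 1 - i = (k - i) + 1 := by omega
          have hCC : (k+1).choose i * (k + 1 - i) = (k + 1) * k.choose i := by
            have h1 : (k+1).choose i = (k+1).choose (k + 1 - i) := by
              rw [Nat.choose_symm (by omega)]
            have h2 : k.choose i = k.choose (k - i) := by
              rw [Nat.choose_symm (by omega)]
            rw [h1, h2, hsub]
            have h3 := Nat.add_one_mul_choose_eq k (k - i)
            omega
          have hCC' : ((k+1).choose i : ℤ) * ((k + 1 - i : ℕ) : ℤ) = ((k:ℤ) + 1) * k.choose i := by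
            exact_mod_cast congrArg (Nat.cast : ℕ → ℤ) hCC
          rw [pow_succ]
          calc (-1 : ℤ) ^ i * (k+1).choose i * (((k + 1 - i : ℕ) : ℤ) ^ n * ((k + 1 - i : ℕ) : ℤ))
              = (-1 : ℤ) ^ i * (((k+1).choose i : ℤ) * ((k + 1 - i : ℕ) : ℤ)) * ((k + 1 - i : ℕ) : ℤ) ^ n := by ring
            _ = ((k : ℤ) + 1) * ((-1 : ℤ) ^ i * k.choose i * ((k + 1 - i : ℕ) : ℤ) ^ n) := by
                rw [hCC']
                ring
        · have : i = k + 1 := by omega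
          subst this
          simp [Nat.choose_succ_self, Nat.sub_self]
      have hstep2 : ∑ i ∈ range (k + 2), (-1 : ℤ) ^ i * k.choose i * ((k + 1 - i : ℕ) : ℤ) ^ n
          = (∑ i ∈ range (k + 2), (-1 : ℤ) ^ i * (k+1).choose i * ((k + 1 - i : ℕ) : ℤ) ^ n)
            + ∑ i ∈ range (k + 1), (-1 : ℤ) ^ i * k.choose i * ((k - i : ℕ) : ℤ) ^ n := by
        have e1 := Finset.sum_range_succ'
          (fun i => (-1 : ℤ) ^ i * (k+1).choose i * ((k + 1 - i : ℕ) : ℤ) ^ n) (k+1)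
        have e2 := Finset.sum_range_succ'
          (fun i => (-1 : ℤ) ^ i * k.choose i * ((k + 1 - i : ℕ) : ℤ) ^ n) (k+1)
        have e3 : ∀ i ∈ range (k + 1),
            (-1 : ℤ) ^ (i+1) * (k+1).choose (i+1) * ((k + 1 - (i+1) : ℕ) : ℤ) ^ n
            = -((-1 : ℤ) ^ i * k.choose i * ((k - i : ℕ) : ℤ) ^ n)
              + (-1 : ℤ) ^ (i+1) * k.choose (i+1) * ((k - i : ℕ) : ℤ) ^ n := by
          intro i hi
          have hsub : k + 1 - (i+1) = k - i := by omega
          rw [hsub, Nat.choose_succ_succ]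
          push_cast
          ring
        have e4 : ∀ i ∈ range (k + 1),
            (-1 : ℤ) ^ (i+1) * k.choose (i+1) * ((k + 1 - (i+1) : ℕ) : ℤ) ^ n
            = (-1 : ℤ) ^ (i+1) * k.choose (i+1) * ((k - i : ℕ) : ℤ) ^ n := by
          intro i hi
          have hsub : k + 1 - (i+1) = k - i := by omega
          rw [hsub]
        rw [Finset.sum_congr rfl e3, Finset.sum_add_distrib] at e1
        rw [Finset.sum_congr rfl e4] at e2
        rw [Finset.sum_neg_distrib] at e1
        simp only [pow_zero, Nat.choose_zero_right, Nat.cast_one, one_mul, Nat.sub_zero,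
          show k + 1 + 1 = k + 2 by rfl] at e1 e2
        linarith [e1, e2]
      have hT : ∑ i ∈ range (k + 2), (-1 : ℤ) ^ i * (k+1).choose i * ((k + 1 - i : ℕ) : ℤ) ^ (n+1)
          = ((k : ℤ) + 1) * (∑ i ∈ range (k + 2), (-1 : ℤ) ^ i * k.choose i * ((k + 1 - i : ℕ) : ℤ) ^ n) := by
        rw [Finset.sum_congr rfl hstep1, ← Finset.mul_sum]
      have hS : S2 (n+1) (k+1) = (k + 1) * S2 n (k + 1) + S2 n k := rfl
      rw [hS, Nat.factorial_succ, hT, hstep2]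
      have ih1 := ih (k+1)
      have ih2 := ih k
      rw [Nat.factorial_succ] at ih1
      simp only [show k + 1 + 1 = k + 2 by rfl] at ih1
      push_cast at ih1 ih2 ⊢
      linear_combination ((k : ℤ) + 1) * ih1 + ((k : ℤ) + 1) * ih2

section Modular

variable (p : ℕ) [hpf : Fact p.Prime]

lemma S2_cast_p (k : ℕ) :
    (S2 p k : ZMod p) = (if k = 1 then 1 else 0) + (if k = p then 1 else 0) := by
  have hp2 : 2 ≤ p := (Fact.out : p.Prime).two_le
  rcases Nat.lt_trichotomy k p with hk | hk | hk
  · -- k < p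
    rw [if_neg (by omega : ¬ k = p), add_zero]
    rcases Nat.eq_zero_or_pos k with rfl | hk0
    · rw [if_neg (by omega : ¬ (0:ℕ) = 1)]
      obtain ⟨q, rfl⟩ : ∃ q, p = q + 1 := ⟨p - 1, by omega⟩
      rw [S2_n_zero, if_neg (by omega : ¬ q + 1 = 0)]
      simp
    · -- 1 ≤ k < p : use factorial formula
      have hform := S2_factorial_formula p k
      have hform1 := S2_factorial_formula 1 k
      have hcast : ((k.factorial : ℕ) : ZMod p) * (S2 p k : ZMod p)
          = ((k.factorial : ℕ) : ZMod p) * (S2 1 k : ZMod p) := by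
        have c1 : (((k.factorial : ℤ) * S2 p k : ℤ) : ZMod p)
            = ((∑ i ∈ range (k + 1), (-1 : ℤ) ^ i * k.choose i * ((k - i : ℕ) : ℤ) ^ p : ℤ) : ZMod p) := by
          exact_mod_cast congrArg (Int.cast : ℤ → ZMod p) hform
        have c2 : (((k.factorial : ℤ) * S2 1 k : ℤ) : ZMod p)
            = ((∑ i ∈ range (k + 1), (-1 : ℤ) ^ i * k.choose i * ((k - i : ℕ) : ℤ) ^ 1 : ℤ) : ZMod p) := by
          exact_mod_cast congrArg (Int.cast : ℤ → ZMod p) hform1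
        push_cast at c1 c2
        rw [c1, c2]
        apply Finset.sum_congr rfl
        intro i hi
        rw [ZMod.pow_card, pow_one]
      have hunit : ((k.factorial : ℕ) : ZMod p) ≠ 0 := by
        rw [Ne, ZMod.natCast_eq_zero_iff]
        intro hdvd
        have := (Nat.Prime.dvd_factorial (Fact.out : p.Prime)).mp hdvd
        omega
      have hSS : (S2 p k : ZMod p) = (S2 1 k : ZMod p) := mul_left_cancel₀ hunit hcast
      rw [hSS]
      by_cases hk1 : k = 1
      · subst hk1
        have hs : S2 1 1 = 1 := rfl
        rw [hs, if_pos rfl]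
        exact Nat.cast_one
      · rw [if_neg hk1, S2_eq_zero_of_lt 1 k (by omega)]
        simp
  · subst hk
    rw [S2_self, if_pos rfl, if_neg (by omega : ¬ k = 1)]
    simp
  · rw [S2_eq_zero_of_lt p k hk, if_neg (by omega : ¬ k = 1), if_neg (by omega : ¬ k = p)]
    simp

lemma rS2_cast_p (r k : ℕ) :
    (rS2 r p k : ZMod p) = (r : ZMod p) * (if k = 0 then 1 else 0)
      + (if k = 1 then 1 else 0) + (if k = p then 1 else 0) := by
  have hp1 : 1 ≤ p := (Fact.out : p.Prime).one_lt.le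
  rw [rS2_eq_sum]
  push_cast
  rw [Finset.sum_range_succ]
  have hmid : ∀ j ∈ range p, ((p.choose j : ZMod p)) * (r : ZMod p) ^ (p - j) * (S2 j k : ZMod p)
      = (if j = 0 then (r : ZMod p) ^ p * (S2 0 k : ZMod p) else 0) := by
    intro j hj
    simp only [mem_range] at hj
    rcases Nat.eq_zero_or_pos j with rfl | hj0
    · simp
    · rw [if_neg (by omega : ¬ j = 0)]
      have : (p.choose j : ZMod p) = 0 := by
        rw [ZMod.natCast_eq_zero_iff]
        exact Nat.Prime.dvd_choose_self (Fact.out : p.Prime) (by omega) hj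
      rw [this]
      ring
  rw [Finset.sum_congr rfl hmid, Finset.sum_ite_eq' (range p) 0]
  rw [if_pos (Finset.mem_range.mpr (by omega : 0 < p))]
  rw [Nat.choose_self, Nat.sub_self, ZMod.pow_card]
  rw [S2_cast_p, S2_zero]
  push_cast
  by_cases hk0 : k = 0
  · subst hk0
    simp [if_neg (by omega : ¬ (0:ℕ) = 1), if_neg (by omega : ¬ (0:ℕ) = p)]
  · simp only [if_neg hk0]
    ring

lemma rS2_cast_add_p (r n k : ℕ) : ((rS2 (r + p) n k : ℕ) : ZMod p) = (rS2 r n k : ZMod p) := by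
  rw [rS2_eq_sum, rS2_eq_sum]
  push_cast
  apply Finset.sum_congr rfl
  intro j hj
  have h : ((r : ZMod p) + (p : ZMod p)) = (r : ZMod p) := by
    rw [ZMod.natCast_self, add_zero]
  rw [h]

/-- Signed derangement numbers mod p. -/
noncomputable def dsg (j : ℕ) : ZMod p := (-1 : ZMod p) ^ j * (numDerangements j : ZMod p)

lemma dsg_zero : dsg p 0 = 1 := by simp [dsg]

lemma dsg_succ (j : ℕ) : dsg p (j + 1) = 1 - ((j : ZMod p) + 1) * dsg p j := by
  have h := numDerangements_succ j
  have h2 : ((numDerangements (j+1) : ℤ) : ZMod p)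
      = ((((j : ℤ) + 1) * (numDerangements j : ℤ) - (-1) ^ j : ℤ) : ZMod p) :=
    congrArg (Int.cast : ℤ → ZMod p) h
  push_cast at h2
  unfold dsg
  rw [h2, pow_succ]
  have ha : ((-1 : ZMod p)) ^ j * (-1 : ZMod p) ^ j = 1 := by
    rw [← pow_add, ← two_mul, pow_mul]
    norm_num
  linear_combination ha

lemma dsg_add_p : ∀ j, dsg p (j + p) = dsg p j := by
  have hp2 : 2 ≤ p := (Fact.out : p.Prime).two_le
  have base : dsg p p = 1 := by
    obtain ⟨q, rfl⟩ : ∃ q, p = q + 1 := ⟨p - 1, by omega⟩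
    rw [dsg_succ]
    have hz : ((q : ZMod (q+1)) + 1) = 0 := by
      have := ZMod.natCast_self (q + 1)
      push_cast at this
      exact this
    rw [hz, zero_mul, sub_zero]
  intro j
  induction j with
  | zero => rw [Nat.zero_add, base, dsg_zero]
  | succ j ih =>
    have h1 : j + 1 + p = (j + p) + 1 := by omega
    rw [h1, dsg_succ, dsg_succ, ih]
    congr 2
    push_cast
    rw [ZMod.natCast_self]
    ring

end Modular

/-- Triangle reindexing of a double sum. -/
lemma sum_triangle {M : Type*} [AddCommMonoid M] (f : ℕ → ℕ → M) :
    ∀ K, ∑ k ∈ range K, ∑ j ∈ range (k + 1), f j (k - j)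
      = ∑ j ∈ range K, ∑ i ∈ range (K - j), f j i := by
  intro K
  induction K with
  | zero => simp
  | succ K ih =>
    rw [Finset.sum_range_succ (fun k => ∑ j ∈ range (k + 1), f j (k - j)) K, ih]
    rw [Finset.sum_range_succ (fun j => f j (K - j)) K, Nat.sub_self]
    rw [Finset.sum_range_succ (fun j => ∑ i ∈ range (K + 1 - j), f j i) K]
    rw [show K + 1 - K = 1 by omega, Finset.sum_range_one]
    have e1 : ∀ j ∈ range K, ∑ i ∈ range (K + 1 - j), f j i
        = ∑ i ∈ range (K - j), f j i + f j (K - j) := by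
      intro j hj
      simp only [mem_range] at hj
      have h : K + 1 - j = (K - j) + 1 := by omega
      rw [h, Finset.sum_range_succ]
    rw [Finset.sum_congr rfl e1, Finset.sum_add_distrib]
    abel

section Gsec

variable (p : ℕ) [hpf : Fact p.Prime]

/-- The key auxiliary sum. -/
noncomputable def G (t r n : ℕ) : ZMod p :=
  ∑ k ∈ range (n + 1), (rS2 r n k : ZMod p) * dsg p (k + r + t)

lemma G_zero (t r : ℕ) : G p t r 0 = dsg p (r + t) := by
  unfold G
  rw [Finset.sum_range_one]
  simp [rS2_zero]

lemma G_one (t r : ℕ) : G p t r 1 = (r : ZMod p) * dsg p (r + t) + dsg p (1 + r + t) := by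
  unfold G
  rw [Finset.sum_range_succ, Finset.sum_range_one]
  have h0 : rS2 r 1 0 = r := by rw [rS2_n_zero, pow_one]
  have h1 : rS2 r 1 1 = 1 := rfl
  rw [h0, h1]
  push_cast
  ring_nf

lemma G_succ (t r n : ℕ) : G p t r (n + 1) = G p t (r + 1) n + (r : ZMod p) * G p t r n := by
  unfold G
  rw [Finset.sum_range_succ' (fun k => (rS2 r (n+1) k : ZMod p) * dsg p (k + r + t)) (n + 1)]
  have hterm : ∀ k ∈ range (n + 1),
      (rS2 r (n+1) (k+1) : ZMod p) * dsg p (k + 1 + r + t)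
      = (rS2 (r+1) n k : ZMod p) * dsg p (k + (r+1) + t)
        + (r : ZMod p) * ((rS2 r n (k+1) : ZMod p) * dsg p (k + 1 + r + t)) := by
    intro k hk
    rw [rS2_shift r n k]
    have h : k + 1 + r + t = k + (r + 1) + t := by omega
    rw [h]
    push_cast
    ring
  rw [Finset.sum_congr rfl hterm, Finset.sum_add_distrib, ← Finset.mul_sum]
  have h0 : (rS2 r (n+1) 0 : ZMod p) * dsg p (0 + r + t)
      = (r : ZMod p) * ((rS2 r n 0 : ZMod p) * dsg p (0 + r + t)) := by
    rw [rS2_succ_zero]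
    push_cast
    ring
  rw [h0]
  have hback : (∑ k ∈ range (n+1), (rS2 r n (k+1) : ZMod p) * dsg p (k + 1 + r + t))
        + (rS2 r n 0 : ZMod p) * dsg p (0 + r + t)
      = ∑ k ∈ range (n + 1), (rS2 r n k : ZMod p) * dsg p (k + r + t) := by
    have e := Finset.sum_range_succ' (fun k => (rS2 r n k : ZMod p) * dsg p (k + r + t)) (n + 1)
    have e2 := Finset.sum_range_succ (fun k => (rS2 r n k : ZMod p) * dsg p (k + r + t)) (n + 1)
    rw [rS2_eq_zero_of_lt r n (n+1) (by omega)] at e2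
    push_cast at e2
    rw [zero_mul, add_zero] at e2
    rw [← e2, e]
  rw [← hback]
  ring

lemma G_radd_p (t r n : ℕ) : G p t (r + p) n = G p t r n := by
  unfold G
  apply Finset.sum_congr rfl
  intro k hk
  rw [rS2_cast_add_p]
  have h : k + (r + p) + t = (k + r + t) + p := by omega
  rw [h, dsg_add_p]

lemma G_pstep (t r n : ℕ) : G p t r (n + p) = G p t r n + G p t r (n + 1) := by
  have hp2 : 2 ≤ p := (Fact.out : p.Prime).two_le
  have expand : G p t r (n + p)
      = ∑ j ∈ range (p + 1), (rS2 r p j : ZMod p) * G p t (j + r) n := by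
    unfold G
    have hcomp : ∀ k ∈ range (n + p + 1),
        (rS2 r (n + p) k : ZMod p) * dsg p (k + r + t)
        = ∑ j ∈ range (k + 1),
            (rS2 r p j : ZMod p) * ((rS2 (j + r) n (k - j) : ZMod p) * dsg p ((k - j) + (j + r) + t)) := by
      intro k hk
      rw [rS2_comp r p n k]
      push_cast
      rw [Finset.sum_mul]
      apply Finset.sum_congr rfl
      intro j hj
      simp only [mem_range] at hj
      have h : k - j + (j + r) + t = k + r + t := by omega
      rw [h]
      ring
    rw [Finset.sum_congr rfl hcomp]
    rw [sum_triangle (fun j i => (rS2 r p j : ZMod p) * ((rS2 (j + r) n i : ZMod p) * dsg p (i + (j + r) + t))) (n + p + 1)]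
    have houter : ∑ j ∈ range (p + 1), ∑ i ∈ range (n + p + 1 - j),
          (rS2 r p j : ZMod p) * ((rS2 (j + r) n i : ZMod p) * dsg p (i + (j + r) + t))
        = ∑ j ∈ range (n + p + 1), ∑ i ∈ range (n + p + 1 - j),
          (rS2 r p j : ZMod p) * ((rS2 (j + r) n i : ZMod p) * dsg p (i + (j + r) + t)) := by
      apply Finset.sum_subset (Finset.range_subset_range.mpr (by omega : p + 1 ≤ n + p + 1))
      intro j hj hnj
      simp only [mem_range] at hj hnj
      rw [rS2_eq_zero_of_lt r p j (by omega)]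
      push_cast
      simp
    rw [← houter]
    apply Finset.sum_congr rfl
    intro j hj
    simp only [mem_range] at hj
    have hinner : ∑ i ∈ range (n + 1), ((rS2 (j + r) n i : ZMod p) * dsg p (i + (j + r) + t))
        = ∑ i ∈ range (n + p + 1 - j), ((rS2 (j + r) n i : ZMod p) * dsg p (i + (j + r) + t)) := by
      apply Finset.sum_subset (Finset.range_subset_range.mpr (by omega : n + 1 ≤ n + p + 1 - j))
      intro i hi hni
      simp only [mem_range] at hi hni
      rw [rS2_eq_zero_of_lt (j + r) n i (by omega)]
      push_cast
      ring
    rw [← Finset.mul_sum, ← hinner]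
  rw [expand]
  have hterm : ∀ j ∈ range (p + 1),
      (rS2 r p j : ZMod p) * G p t (j + r) n
      = ((r : ZMod p) * (if j = 0 then 1 else 0) + (if j = 1 then 1 else 0)
          + (if j = p then 1 else 0)) * G p t (j + r) n := by
    intro j hj
    rw [rS2_cast_p]
  rw [Finset.sum_congr rfl hterm]
  have hsplit : ∀ j ∈ range (p + 1),
      ((r : ZMod p) * (if j = 0 then 1 else 0) + (if j = 1 then 1 else 0)
          + (if j = p then 1 else 0)) * G p t (j + r) n
      = (if j = 0 then (r : ZMod p) * G p t (j + r) n else 0)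
        + (if j = 1 then G p t (j + r) n else 0)
        + (if j = p then G p t (j + r) n else 0) := by
    intro j hj
    by_cases h0 : j = 0
    · subst h0
      rw [if_pos rfl, if_neg (by omega : ¬(0:ℕ) = 1), if_neg (by omega : ¬0 = p),
        if_pos rfl, if_neg (by omega : ¬(0:ℕ) = 1), if_neg (by omega : ¬0 = p)]
      ring
    · by_cases h1 : j = 1
      · subst h1
        rw [if_neg h0, if_pos rfl, if_neg (by omega : ¬1 = p),
          if_neg h0, if_pos rfl, if_neg (by omega : ¬1 = p)]
        ring
      · by_cases hp' : j = p
        · subst hp'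
          rw [if_neg h0, if_neg h1, if_pos rfl, if_neg h0, if_neg h1, if_pos rfl]
          ring
        · rw [if_neg h0, if_neg h1, if_neg hp', if_neg h0, if_neg h1, if_neg hp']
          ring
  rw [Finset.sum_congr rfl hsplit, Finset.sum_add_distrib, Finset.sum_add_distrib]
  rw [Finset.sum_ite_eq' (range (p+1)) 0 (fun j => (r : ZMod p) * G p t (j + r) n)]
  rw [Finset.sum_ite_eq' (range (p+1)) 1 (fun j => G p t (j + r) n)]
  rw [Finset.sum_ite_eq' (range (p+1)) p (fun j => G p t (j + r) n)]
  rw [if_pos (Finset.mem_range.mpr (by omega)), if_pos (Finset.mem_range.mpr (by omega)),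
    if_pos (Finset.mem_range.mpr (by omega))]
  have hGp : G p t (p + r) n = G p t r n := by
    have h : p + r = r + p := by omega
    rw [h, G_radd_p]
  rw [hGp]
  have hG1 : G p t (1 + r) n = G p t (r + 1) n := by
    have h : 1 + r = r + 1 := by omega
    rw [h]
  have hG0 : G p t (0 + r) n = G p t r n := by
    have h : 0 + r = r := by omega
    rw [h]
  rw [hG1, hG0, G_succ]
  ring

end Gsec

section Lift

variable (p : ℕ) [hpf : Fact p.Prime]

lemma step_lift (q : ℕ) (a : ZMod p) (u : ℕ → ZMod p)
    (h : ∀ n, u (n + q) = a * u n + u (n + 1)) :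
    ∀ j n, u (n + j * q) = ∑ i ∈ range (j + 1), (j.choose i : ZMod p) * a ^ (j - i) * u (n + i) := by
  intro j
  induction j with
  | zero => intro n; simp
  | succ j ih =>
    intro n
    have h1 : n + (j + 1) * q = (n + q) + j * q := by ring
    rw [h1, ih (n + q)]
    have hterm : ∀ i ∈ range (j + 1),
        (j.choose i : ZMod p) * a ^ (j - i) * u (n + q + i)
        = (j.choose i : ZMod p) * a ^ (j - i + 1) * u (n + i)
          + (j.choose i : ZMod p) * a ^ (j - i) * u (n + i + 1) := by
      intro i hi
      have h2 : n + q + i = (n + i) + q := by ring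
      rw [h2, h (n + i), pow_succ]
      ring
    rw [Finset.sum_congr rfl hterm, Finset.sum_add_distrib]
    -- target sum
    rw [Finset.sum_range_succ' (fun i => ((j+1).choose i : ZMod p) * a ^ (j + 1 - i) * u (n + i)) (j + 1)]
    have e1 : ∀ i ∈ range (j + 1),
        ((j+1).choose (i+1) : ZMod p) * a ^ (j + 1 - (i+1)) * u (n + (i + 1))
        = (j.choose i : ZMod p) * a ^ (j - i) * u (n + i + 1)
          + (j.choose (i+1) : ZMod p) * a ^ (j - i) * u (n + i + 1) := by
      intro i hi
      have h3 : j + 1 - (i + 1) = j - i := by omega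
      have h4 : n + (i + 1) = n + i + 1 := by ring
      rw [h3, h4, Nat.choose_succ_succ]
      push_cast
      ring
    rw [Finset.sum_congr rfl e1, Finset.sum_add_distrib]
    have e2 : ∑ i ∈ range (j + 1), (j.choose i : ZMod p) * a ^ (j - i + 1) * u (n + i)
        = ∑ i ∈ range (j + 1), (j.choose (i+1) : ZMod p) * a ^ (j - i) * u (n + i + 1)
          + a ^ (j + 1) * u n := by
      rw [Finset.sum_range_succ' (fun i => (j.choose i : ZMod p) * a ^ (j - i + 1) * u (n + i)) j]
      rw [Finset.sum_range_succ (fun i => (j.choose (i+1) : ZMod p) * a ^ (j - i) * u (n + i + 1)) j]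
      have e3 : ∀ i ∈ range j,
          (j.choose (i+1) : ZMod p) * a ^ (j - (i+1) + 1) * u (n + (i + 1))
          = (j.choose (i+1) : ZMod p) * a ^ (j - i) * u (n + i + 1) := by
        intro i hi
        simp only [mem_range] at hi
        have h5 : j - (i+1) + 1 = j - i := by omega
        have h6 : n + (i + 1) = n + i + 1 := by ring
        rw [h5, h6]
      rw [Finset.sum_congr rfl e3, Nat.choose_succ_self, Nat.choose_zero_right]
      push_cast
      simp only [Nat.sub_zero, Nat.add_zero, zero_mul, add_zero, one_mul]
    rw [e2]
    simp only [Nat.add_zero, Nat.sub_zero, Nat.choose_zero_right, Nat.cast_one, one_mul]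
    ring
end Lift

section Lift2

variable (p : ℕ) [hpf : Fact p.Prime]

lemma pstep_pow (u : ℕ → ZMod p) (h : ∀ n, u (n + p) = u n + u (n + 1)) :
    ∀ (m : ℕ) (n : ℕ), u (n + p ^ m) = (m : ZMod p) * u n + u (n + 1) := by
  intro m
  induction m with
  | zero => intro n; simp
  | succ m ih =>
    intro n
    have hq : p ^ (m + 1) = p * p ^ m := by ring
    rw [hq]
    have hlift := step_lift p (p ^ m) (m : ZMod p) u ih p n
    rw [mul_comm (p : ℕ) (p ^ m)] at hlift ⊢
    rw [hlift]
    rw [Finset.sum_range_succ]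
    have hmid : ∀ i ∈ range p, (p.choose i : ZMod p) * (m : ZMod p) ^ (p - i) * u (n + i)
        = if i = 0 then (m : ZMod p) ^ p * u n else 0 := by
      intro i hi
      simp only [mem_range] at hi
      rcases Nat.eq_zero_or_pos i with rfl | hi0
      · simp
      · rw [if_neg (by omega : ¬ i = 0)]
        have hc : (p.choose i : ZMod p) = 0 := by
          rw [ZMod.natCast_eq_zero_iff]
          exact Nat.Prime.dvd_choose_self (Fact.out : p.Prime) (by omega) hi
        rw [hc]
        ring
    rw [Finset.sum_congr rfl hmid, Finset.sum_ite_eq' (range p) 0 (fun _ => (m : ZMod p) ^ p * u n)]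
    have hp1 : 0 < p := (Fact.out : p.Prime).pos
    rw [if_pos (Finset.mem_range.mpr hp1)]
    rw [Nat.choose_self, Nat.sub_self, ZMod.pow_card, h n]
    push_cast
    ring

lemma G_base (t : ℕ) (m : ℕ) (hm : t + 1 = m) (r : ℕ) : G p t r (p ^ m) = 1 := by
  have hps := pstep_pow p (G p t r) (fun n => G_pstep p t r n) m 0
  rw [Nat.zero_add] at hps
  rw [hps, G_zero, G_one]
  have hc : ((r + t : ℕ) : ZMod p) = (r : ZMod p) + (t : ZMod p) := by push_cast; ring
  have hm' : (t : ZMod p) + 1 = (m : ZMod p) := by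
    have : ((t + 1 : ℕ) : ZMod p) = (m : ZMod p) := by rw [hm]
    push_cast at this
    exact this
  have h1rt : (1 : ℕ) + r + t = (r + t) + 1 := by omega
  rw [h1rt, dsg_succ, hc]
  linear_combination (- dsg p (r + t)) * hm'

lemma main_eq (t : ℕ) (m : ℕ) (hm : t + 1 = m) :
    ∀ N r, (rBellNat N r : ZMod p) = G p t r (N + p ^ m) := by
  intro N
  induction N with
  | zero =>
    intro r
    rw [Nat.zero_add, G_base p t m hm r]
    unfold rBellNat
    rw [Finset.sum_range_one]
    simp [rS2_zero]
  | succ N ih =>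
    intro r
    rw [rBellNat_succ]
    push_cast
    rw [ih (r + 1), ih r]
    have h : N + 1 + p ^ m = (N + p ^ m) + 1 := by omega
    rw [h, G_succ]

end Lift2

theorem backward_touchard_general (p : ℕ) (hp : p.Prime) (n m r : ℕ)
    (hn : 1 ≤ n) (hm : 1 ≤ m) (hnp : p ^ m ≤ n) (hpm : ¬ p ∣ m) :
    (rBellNat (n - p ^ m) r : ℤ)
      ≡ ∑ k ∈ Finset.range (n + 1),
          (rS2 r n k : ℤ) * (-1 : ℤ) ^ (k + m + r - 1) * (numDerangements (k + m + r - 1) : ℤ)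
        [ZMOD p] := by
  haveI : Fact p.Prime := ⟨hp⟩
  rw [← ZMod.intCast_eq_intCast_iff]
  push_cast
  obtain ⟨t, ht⟩ : ∃ t, t + 1 = m := ⟨m - 1, by omega⟩
  have hGoal : (∑ k ∈ Finset.range (n + 1),
        (rS2 r n k : ZMod p) * (-1 : ZMod p) ^ (k + m + r - 1) * (numDerangements (k + m + r - 1) : ZMod p))
      = G p t r n := by
    unfold G
    apply Finset.sum_congr rfl
    intro k hk
    have hidx : k + m + r - 1 = k + r + t := by omega
    rw [hidx]
    unfold dsg
    ring
  rw [hGoal]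
  have hsplit : n = (n - p ^ m) + p ^ m := by omega
  rw [(by rw [← hsplit] : G p t r n = G p t r ((n - p ^ m) + p ^ m))]
  exact main_eq p t m ht (n - p ^ m) r
end

section
/- For every prime p and every integer r, and all n ≥ K where K = Σ_{k=1}^{(−r mod p)} p^k, the congruence B_{n,r} ≡ B_{n−K} (mod p) holds, where B_m is the Bell number and (−r mod p) ∈ {0,1,...,p−1} is the residue of −r modulo p. -/
open Finset

lemma S2_zero_succ (k : ℕ) : S2 0 (k+1) = 0 := rfl
lemma S2_succ_zero (n : ℕ) : S2 (n+1) 0 = 0 := rfl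
lemma S2_succ_succ (n k : ℕ) : S2 (n+1) (k+1) = (k + 1) * S2 n (k + 1) + S2 n k := rfl

lemma S2_eq_zero : ∀ {n k : ℕ}, n < k → S2 n k = 0 := by
  intro n
  induction n with
  | zero => intro k hk; match k, hk with | k+1, _ => rfl
  | succ n ih =>
    intro k hk
    match k, hk with
    | k+1, hk =>
      rw [S2_succ_succ, ih (by omega), ih (by omega)]
      simp

lemma S2_rec_sum (n k : ℕ) : S2 (n+1) (k+1) = ∑ j ∈ range (n+1), n.choose j * S2 j k := by
  induction n generalizing k with
  | zero => cases k <;> simp [S2_succ_succ, S2_zero_succ]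
  | succ n ih =>
    have h1 : ∑ j ∈ range (n+1), n.choose (j+1) * S2 (j+1) k + n.choose 0 * S2 0 k
        = S2 (n+1) (k+1) := by
      rw [← Finset.sum_range_succ' (fun j => n.choose j * S2 j k) (n+1),
        Finset.sum_range_succ, Nat.choose_succ_self, zero_mul, add_zero, ih]
    have h2 : ∑ j ∈ range (n+1), n.choose j * S2 (j+1) k
        = k * S2 (n+1) (k+1) + S2 (n+1) k := by
      cases k with
      | zero =>
        have : ∀ j ∈ range (n+1), n.choose j * S2 (j+1) 0 = 0 := fun j _ => by
          simp [S2_succ_zero]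
        rw [Finset.sum_congr rfl this, Finset.sum_const_zero]
        simp [S2_succ_zero]
      | succ m =>
        have : ∀ j ∈ range (n+1), n.choose j * S2 (j+1) (m+1)
            = (m+1) * (n.choose j * S2 j (m+1)) + n.choose j * S2 j m := fun j _ => by
          rw [S2_succ_succ]; ring
        rw [Finset.sum_congr rfl this, Finset.sum_add_distrib, ← Finset.mul_sum, ← ih, ← ih]
    have h3 : ∑ j ∈ range (n+1+1), (n+1).choose j * S2 j k
        = (∑ j ∈ range (n+1), n.choose (j+1) * S2 (j+1) k + n.choose 0 * S2 0 k)
          + ∑ j ∈ range (n+1), n.choose j * S2 (j+1) k := by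
      rw [Finset.sum_range_succ' (fun j => (n+1).choose j * S2 j k) (n+1)]
      have : ∀ j ∈ range (n+1), (n+1).choose (j+1) * S2 (j+1) k
          = n.choose (j+1) * S2 (j+1) k + n.choose j * S2 (j+1) k := fun j _ => by
        rw [Nat.choose_succ_succ', add_mul]; ring
      rw [Finset.sum_congr rfl this, Finset.sum_add_distrib]
      simp only [Nat.choose_zero_right]
      ring
    rw [h3, h1, h2, S2_succ_succ]
    ring

lemma bell_succ (n : ℕ) : bell (n+1) = ∑ j ∈ range (n+1), n.choose j * bell j := by
  have hb : ∀ j ∈ range (n+1), n.choose j * bell j = n.choose j * ∑ k ∈ range (n+1), S2 j k := by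
    intro j hj
    simp only [mem_range] at hj
    congr 1
    exact Finset.sum_subset (Finset.range_subset_range.2 (by omega))
      (fun k _ hk => S2_eq_zero (by simp only [mem_range, not_lt] at hk; omega))
  rw [Finset.sum_congr rfl hb]
  unfold bell
  rw [Finset.sum_range_succ' (fun k => S2 (n+1) k) (n+1)]
  simp only [S2_succ_zero, add_zero]
  rw [Finset.sum_congr rfl (fun k _ => S2_rec_sum n k)]
  rw [Finset.sum_comm]
  exact Finset.sum_congr rfl fun j _ => by rw [Finset.mul_sum]

section Umbral
open Polynomial

variable (p : ℕ) [Fact p.Prime]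

noncomputable def phi (f : Polynomial (ZMod p)) : ZMod p := f.sum fun n a => a * bell n

variable {p}

lemma phi_zero : phi p 0 = 0 := Polynomial.sum_zero_index _

lemma phi_add (f g : Polynomial (ZMod p)) : phi p (f + g) = phi p f + phi p g :=
  Polynomial.sum_add_index f g _ (fun n => zero_mul _) (fun n a b => add_mul a b _)

lemma phi_monomial (n : ℕ) (a : ZMod p) : phi p (monomial n a) = a * bell n :=
  Polynomial.sum_monomial_index a _ (zero_mul _)

lemma phi_finset_sum {ι : Type*} (s : Finset ι) (g : ι → Polynomial (ZMod p)) :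
    phi p (∑ i ∈ s, g i) = ∑ i ∈ s, phi p (g i) := by
  classical
  induction s using Finset.induction_on with
  | empty => simp [phi_zero]
  | insert _ _ h ih => rw [Finset.sum_insert h, phi_add, ih, Finset.sum_insert h]

lemma phi_X_pow (n : ℕ) : phi p ((X : Polynomial (ZMod p)) ^ n) = bell n := by
  rw [X_pow_eq_monomial, phi_monomial, one_mul]

lemma phi_C_mul (a : ZMod p) (f : Polynomial (ZMod p)) : phi p (C a * f) = a * phi p f := by
  induction f using Polynomial.induction_on' with
  | add f g hf hg => rw [mul_add, phi_add, hf, hg, phi_add, mul_add]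
  | monomial n b => rw [C_mul_monomial, phi_monomial, phi_monomial, mul_assoc]

lemma phi_neg (f : Polynomial (ZMod p)) : phi p (-f) = - phi p f := by
  have : -f = C (-1) * f := by rw [map_neg, map_one]; ring
  rw [this, phi_C_mul]; ring

lemma phi_sub (f g : Polynomial (ZMod p)) : phi p (f - g) = phi p f - phi p g := by
  rw [sub_eq_add_neg, phi_add, phi_neg, sub_eq_add_neg]

lemma phi_expand (a : ZMod p) (n : ℕ) :
    phi p ((X + C a) ^ n) = ∑ j ∈ Finset.range (n + 1), (n.choose j : ZMod p) * a ^ (n - j) * bell j := by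
  rw [add_pow, phi_finset_sum]
  refine Finset.sum_congr rfl fun j _ => ?_
  have : (X : Polynomial (ZMod p)) ^ j * C a ^ (n - j) * (n.choose j : Polynomial (ZMod p))
      = C ((n.choose j : ZMod p) * a ^ (n - j)) * X ^ j := by
    rw [← C_pow, ← C_eq_natCast, mul_assoc, ← C_mul, mul_comm ((n.choose j : ZMod p)) _]
    ring
  rw [this, phi_C_mul, phi_X_pow, mul_assoc]

lemma phi_master (f : Polynomial (ZMod p)) : phi p (X * f) = phi p (f.comp (X + 1)) := by
  induction f using Polynomial.induction_on' with
  | add f g hf hg => rw [mul_add, phi_add, hf, hg, add_comp, phi_add]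
  | monomial n a =>
    have h1 : (X : Polynomial (ZMod p)) * monomial n a = monomial (n + 1) a := by
      rw [← pow_one (X : Polynomial (ZMod p)), X_pow_eq_monomial, monomial_mul_monomial,
        one_mul, add_comm]
    have h2 : ((monomial n a : Polynomial (ZMod p))).comp (X + 1) = C a * (X + C 1) ^ n := by
      rw [← C_mul_X_pow_eq_monomial, mul_comp, C_comp, pow_comp, X_comp, C_1]
    rw [h1, phi_monomial, h2, phi_C_mul, phi_expand]
    simp only [one_pow, mul_one]
    congr 1
    calc (bell (n+1) : ZMod p)
        = ((∑ j ∈ Finset.range (n+1), n.choose j * bell j : ℕ) : ZMod p) := by rw [← bell_succ]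
      _ = ∑ j ∈ Finset.range (n+1), (n.choose j : ZMod p) * (bell j : ZMod p) := by push_cast; rfl

lemma phi_fall_mul (k : ℕ) (f : Polynomial (ZMod p)) :
    phi p ((∏ i ∈ Finset.range k, (X - C (i : ZMod p))) * f)
      = phi p (f.comp (X + C (k : ZMod p))) := by
  induction k generalizing f with
  | zero => simp
  | succ k ih =>
    rw [Finset.prod_range_succ, mul_assoc, ih ((X - C (k : ZMod p)) * f)]
    rw [mul_comp, sub_comp, X_comp, C_comp, add_sub_cancel_right, phi_master]
    rw [comp_assoc]
    congr 2
    rw [add_comp, X_comp, C_comp, Nat.cast_add, Nat.cast_one, map_add, C_1]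
    ring

lemma fall_eq : (∏ i ∈ Finset.range p, (X - C (i : ZMod p))) = X ^ p - X := by
  have hmonic : (X ^ p - X : Polynomial (ZMod p)).Monic := by
    apply monic_X_pow_sub
    rw [degree_X]
    exact_mod_cast Nat.lt_of_lt_of_le (Fact.out (p := p.Prime)).one_lt le_rfl
  have hcard : (ZMod p) = ZMod p := rfl
  have hroots : (X ^ p - X : Polynomial (ZMod p)).roots = Finset.univ.val := by
    have := FiniteField.roots_X_pow_card_sub_X (ZMod p)
    rwa [ZMod.card] at this
  have hdeg : (X ^ p - X : Polynomial (ZMod p)).natDegree = p := by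
    have := FiniteField.X_pow_card_sub_X_natDegree_eq (ZMod p) (Fact.out (p := p.Prime)).one_lt
    exact this
  have hprod := prod_multiset_X_sub_C_of_monic_of_roots_card_eq hmonic
    (by rw [hroots, hdeg]; simp [Finset.card_univ, ZMod.card])
  rw [← hprod, hroots]
  rw [show (Multiset.map (fun a => X - C a) Finset.univ.val).prod
      = ∏ a : ZMod p, (X - C a) from rfl]
  refine Finset.prod_nbij' (fun i => (i : ZMod p)) (fun a => a.val) ?_ ?_ ?_ ?_ ?_
  · intro a _; exact Finset.mem_univ _
  · intro a _
    simp only [Finset.mem_range]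
    exact ZMod.val_lt a
  · intro a ha
    simp only [Finset.mem_range] at ha
    exact ZMod.val_cast_of_lt ha
  · intro a _; exact ZMod.natCast_rightInverse a
  · intro a _; rfl

lemma phi_g_mul (f : Polynomial (ZMod p)) : phi p ((X ^ p - X - 1) * f) = 0 := by
  have h : (X ^ p - X - 1 : Polynomial (ZMod p)) * f = (X ^ p - X) * f - f := by ring
  rw [h, phi_sub, ← fall_eq, phi_fall_mul]
  simp [ZMod.natCast_self]

lemma phi_congr {f g : Polynomial (ZMod p)} (q : Polynomial (ZMod p))
    (h : f = (X ^ p - X - 1) * q + g) : phi p f = phi p g := by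
  rw [h, phi_add, phi_g_mul, zero_add]

lemma X_pow_pow (s : ℕ) : ∃ q : Polynomial (ZMod p),
    (X : Polynomial (ZMod p)) ^ (p ^ s) = (X ^ p - X - 1) * q + (X + C (s : ZMod p)) := by
  induction s with
  | zero => exact ⟨0, by simp⟩
  | succ s ih =>
    obtain ⟨q, hq⟩ := ih
    refine ⟨(X ^ p - X - 1) ^ (p - 1) * q ^ p + 1, ?_⟩
    have h1 : (X : Polynomial (ZMod p)) ^ (p ^ (s + 1)) = ((X : Polynomial (ZMod p)) ^ (p ^ s)) ^ p := by
      rw [← pow_mul, pow_succ]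
    rw [h1, hq, add_pow_char, mul_pow]
    have h2 : ((X : Polynomial (ZMod p)) + C (s : ZMod p)) ^ p = X ^ p + C (s : ZMod p) := by
      rw [add_pow_char, ← C_pow, ZMod.pow_card]
    have hp1 : 1 ≤ p := (Fact.out (p := p.Prime)).one_lt.le
    have h3 : ∀ g : Polynomial (ZMod p), g ^ p = g * g ^ (p - 1) := fun g => by
      have h := pow_succ g (p - 1)
      rw [Nat.sub_add_cancel hp1] at h
      rw [h, mul_comm]
    rw [h2, h3]
    have : (X : Polynomial (ZMod p)) ^ p = (X ^ p - X - 1) + (X + 1) := by ring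
    rw [Nat.cast_add, Nat.cast_one, map_add, C_1]
    ring

lemma phi_step (s n : ℕ) :
    phi p ((X - C (s : ZMod p)) ^ (n + p ^ s)) = phi p ((X - C ((s : ZMod p) - 1)) ^ n) := by
  obtain ⟨q, hq⟩ := X_pow_pow (p := p) s
  have h1 : ((X : Polynomial (ZMod p)) - C (s : ZMod p)) ^ (p ^ s)
      = (X ^ p - X - 1) * q + X := by
    rw [sub_pow_char_pow, ← C_pow, ZMod.pow_card_pow, hq]
    ring
  have h2 : ((X : Polynomial (ZMod p)) - C (s : ZMod p)) ^ (n + p ^ s)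
      = (X ^ p - X - 1) * (q * (X - C (s : ZMod p)) ^ n)
        + X * (X - C (s : ZMod p)) ^ n := by
    rw [pow_add, h1]; ring
  rw [phi_congr _ h2, phi_master, pow_comp, sub_comp, X_comp, C_comp,
    show (X + 1 : Polynomial (ZMod p)) - C ((s : ZMod p)) = X - C ((s : ZMod p) - 1) by
      rw [map_sub, C_1]; ring]

lemma phi_main (t : ℕ) : ∀ n, (∑ k ∈ Finset.Icc 1 t, p ^ k) ≤ n →
    phi p ((X - C (t : ZMod p)) ^ n) = bell (n - ∑ k ∈ Finset.Icc 1 t, p ^ k) := by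
  induction t with
  | zero =>
    intro n _
    simp only [Nat.cast_zero, map_zero, sub_zero, phi_X_pow]
    simp
  | succ t ih =>
    intro n hn
    have hK : ∑ k ∈ Finset.Icc 1 (t+1), p ^ k = ∑ k ∈ Finset.Icc 1 t, p ^ k + p ^ (t+1) :=
      Finset.sum_Icc_succ_top (by omega) _
    rw [hK] at hn ⊢
    have hsplit : n = (n - p ^ (t+1)) + p ^ (t+1) := by omega
    conv_lhs => rw [hsplit]
    rw [phi_step (p := p) (t+1) (n - p ^ (t+1)),
      show (((t+1 : ℕ)) : ZMod p) - 1 = ((t : ℕ) : ZMod p) by push_cast; ring,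
      ih (n - p ^ (t+1)) (by omega)]
    rw [show n - p ^ (t+1) - ∑ k ∈ Finset.Icc 1 t, p ^ k
        = n - (∑ k ∈ Finset.Icc 1 t, p ^ k + p ^ (t+1)) by omega]

end Umbral

theorem rBell_as_shifted_bell (p : ℕ) (hp : p.Prime) (r : ℤ) (n : ℕ)
    (hn : ∑ k ∈ Finset.Icc 1 ((-r) % (p : ℤ)).toNat, p ^ k ≤ n) :
    rBell n r ≡ (bell (n - ∑ k ∈ Finset.Icc 1 ((-r) % (p : ℤ)).toNat, p ^ k) : ℤ) [ZMOD p] := by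
  haveI : Fact p.Prime := ⟨hp⟩
  rw [← ZMod.intCast_eq_intCast_iff]
  set t : ℕ := ((-r) % (p : ℤ)).toNat with ht
  have hr : ((r : ℤ) : ZMod p) = -(t : ZMod p) := by
    have hp0 : (p : ℤ) ≠ 0 := by exact_mod_cast hp.ne_zero
    have h1 : ((t : ℤ)) = (-r) % p := Int.toNat_of_nonneg (Int.emod_nonneg _ hp0)
    have h2 : ((t : ℤ) : ZMod p) = ((-r : ℤ) : ZMod p) := by rw [h1, ZMod.intCast_mod]
    push_cast at h2
    rw [h2, neg_neg]
  have hL : ((rBell n r : ℤ) : ZMod p)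
      = phi p ((Polynomial.X - Polynomial.C ((t : ZMod p))) ^ n) := by
    rw [show ((Polynomial.X : Polynomial (ZMod p)) - Polynomial.C ((t : ZMod p)))
        = Polynomial.X + Polynomial.C (((r : ℤ) : ZMod p)) by rw [hr, map_neg]; ring]
    rw [phi_expand]
    unfold rBell
    push_cast
    exact Finset.sum_congr rfl fun j _ => by push_cast; ring
  rw [hL, phi_main t n hn]
  push_cast
  rfl
end
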